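/- arXiv:2507.03966 — 4 statements merged into one kernel-verified Lean document; each statement's English description precedes it below -/
import Mathlib

section
/- Let c ∈ (−√2, √2) and β = √(2 − c²). For every twice continuously differentiable function f : ℝ → ℝ and every x ∈ ℝ, one has S_c*(S_c f)(x) = −f''(x) + β²·f(x) − 3·Q_c(x)·f(x); that is, the factorization identity L_+ = S_c* ∘ S_c holds. -/
open Real

/-- The real part of the traveling-wave profile. -/
noncomputable def Rc (c x : ℝ) : ℝ :=
  Real.sqrt ((2 - c ^ 2) / 2) * Real.tanh (Real.sqrt (2 - c ^ 2) * x / 2)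

/-- The soliton profile `Q_c(x) = (β²/2) sech²(βx/2)` with `β = √(2 - c²)`. -/
noncomputable def Q (c x : ℝ) : ℝ :=
  (Real.sqrt (2 - c ^ 2)) ^ 2 / 2
    * ((Real.cosh (Real.sqrt (2 - c ^ 2) * x / 2))⁻¹) ^ 2

/-- The operator `S_c f = f' + √2 R_c f`. -/
noncomputable def Sc (c : ℝ) (f : ℝ → ℝ) (x : ℝ) : ℝ :=
  deriv f x + Real.sqrt 2 * Rc c x * f x

/-- The operator `S_c* f = -f' + √2 R_c f`. -/
noncomputable def Sst (c : ℝ) (f : ℝ → ℝ) (x : ℝ) : ℝ :=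
  -deriv f x + Real.sqrt 2 * Rc c x * f x

/-!
With `W = √2 R_c = β tanh (β x / 2)` we have `S_c = d/dx + W` and `S_c* = -d/dx + W`, so
`S_c* S_c = -d²/dx² + W² - W'` for any differentiable `W`. The kink potential satisfies
`W' = (β² / 2) sech² (β x / 2)` and `W² = β² (1 - sech² (β x / 2))`, hence `W² - W' = β² - 3 Q_c`.
-/

theorem Real.tanh_sq_add_inv_cosh_sq (x : ℝ) : tanh x ^ 2 + (cosh x)⁻¹ ^ 2 = 1 := by
  have hcosh : cosh x ≠ 0 := (cosh_pos x).ne'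
  rw [tanh_eq_sinh_div_cosh]
  field_simp
  linear_combination -(cosh_sq_sub_sinh_sq x)

theorem Real.hasDerivAt_tanh (x : ℝ) : HasDerivAt tanh ((cosh x)⁻¹ ^ 2) x := by
  have hcosh : cosh x ≠ 0 := (cosh_pos x).ne'
  have h := (hasDerivAt_sinh x).div (hasDerivAt_cosh x) hcosh
  rw [show sinh / cosh = tanh from funext fun y => (tanh_eq_sinh_div_cosh y).symm] at h
  refine h.congr_deriv ?_
  field_simp
  exact cosh_sq_sub_sinh_sq x

theorem hasDerivAt_mul_tanh_mul_div_two (b x : ℝ) :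
    HasDerivAt (fun y => b * tanh (b * y / 2)) (b ^ 2 / 2 * (cosh (b * x / 2))⁻¹ ^ 2) x := by
  have hlin : HasDerivAt (fun y : ℝ => b * y / 2) (b / 2) x := by
    simpa using ((hasDerivAt_id x).const_mul b).div_const 2
  refine (((hasDerivAt_tanh _).comp x hlin).const_mul b).congr_deriv ?_
  ring

theorem sqrt_two_mul_Rc (c x : ℝ) :
    √2 * Rc c x = √(2 - c ^ 2) * tanh (√(2 - c ^ 2) * x / 2) := by
  rw [Rc, ← mul_assoc, ← sqrt_mul zero_le_two, mul_div_cancel₀ _ two_ne_zero]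

theorem neg_deriv_add_mul_deriv_add_mul {W f : ℝ → ℝ} {W' x : ℝ} (hW : HasDerivAt W W' x)
    (hf : DifferentiableAt ℝ f x) (hf' : DifferentiableAt ℝ (deriv f) x) :
    -deriv (fun y => deriv f y + W y * f y) x + W x * (deriv f x + W x * f x)
      = -deriv (deriv f) x + (W x ^ 2 - W') * f x := by
  have hSf : HasDerivAt (fun y => deriv f y + W y * f y)
      (deriv (deriv f) x + (W' * f x + W x * deriv f x)) x :=
    hf'.hasDerivAt.add (hW.mul hf.hasDerivAt)
  rw [hSf.deriv]
  ring

theorem Lplus_factorization_general (c : ℝ)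
    (f : ℝ → ℝ) (hf : ContDiff ℝ 2 f) (x : ℝ) :
    Sst c (Sc c f) x
      = -deriv (deriv f) x + (Real.sqrt (2 - c ^ 2)) ^ 2 * f x
        - 3 * Q c x * f x := by
  set β := √(2 - c ^ 2)
  have hW : HasDerivAt (fun y => √2 * Rc c y) (β ^ 2 / 2 * (cosh (β * x / 2))⁻¹ ^ 2) x := by
    simpa only [sqrt_two_mul_Rc] using hasDerivAt_mul_tanh_mul_div_two β x
  have hf' : ContDiff ℝ 1 (deriv f) := hf.deriv'
  calc Sst c (Sc c f) x
      = -deriv (deriv f) x + ((√2 * Rc c x) ^ 2 - β ^ 2 / 2 * (cosh (β * x / 2))⁻¹ ^ 2) * f x :=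
        neg_deriv_add_mul_deriv_add_mul hW (hf.differentiable two_ne_zero x)
          (hf'.differentiable one_ne_zero x)
    _ = -deriv (deriv f) x + β ^ 2 * f x - 3 * Q c x * f x := by
        rw [sqrt_two_mul_Rc, Q]
        linear_combination β ^ 2 * f x * tanh_sq_add_inv_cosh_sq (β * x / 2)

/-- Factorization identity `L₊ = S_c* ∘ S_c`: for `f` of class `C²`,
`S_c*(S_c f) = -f'' + β² f - 3 Q_c f`. -/
theorem Lplus_factorization (c : ℝ)
    (hc : c ∈ Set.Ioo (-Real.sqrt 2) (Real.sqrt 2))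
    (f : ℝ → ℝ) (hf : ContDiff ℝ 2 f) (x : ℝ) :
    Sst c (Sc c f) x
      = -deriv (deriv f) x + (Real.sqrt (2 - c ^ 2)) ^ 2 * f x
        - 3 * Q c x * f x :=
  Lplus_factorization_general c f hf x
end

section
/- For every κ > 0 there exists a constant C > 0 such that for every continuously differentiable function f : ℝ → ℝ with ∫_ℝ (f')² < ∞ and ∫_ℝ ρ·f² < ∞, one has sup_{x ∈ ℝ} |f(x)|·ρ(x)^κ ≤ C·( ∫_ℝ (f')² + ∫_ℝ ρ·f² )^{1/2}, where ρ(x) = sech(x). -/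
open Real MeasureTheory

/-- The weight `ρ(x) = sech x`. -/
noncomputable def rho (x : ℝ) : ℝ := (Real.cosh x)⁻¹

/-!
Cauchy–Schwarz gives `(f x - f y)² ≤ |x - y| ∫ f'²`. By the mean value theorem for integrals some
`y ∈ (0, 1)` has `ρ y f(y)² ≤ ∫ ρ f²`, and `ρ ≥ 1/3` there, so `f(x)² ≲ ∫ ρ f² + (1 + |x|) ∫ f'²`.
Since `ρ x ≤ 2 e^{-|x|}`, the weight `ρ^{2κ}` absorbs the linear growth `1 + |x|`.
-/

open Set Filter

theorem sq_intervalIntegral_le {g : ℝ → ℝ} {a b : ℝ} (hab : a ≤ b)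
    (hg : IntervalIntegrable g volume a b)
    (hg2 : IntervalIntegrable (fun t => g t ^ 2) volume a b) :
    (∫ t in a..b, g t) ^ 2 ≤ (b - a) * ∫ t in a..b, g t ^ 2 := by
  rcases hab.eq_or_lt with rfl | hlt
  · simp
  have jensen : (⨍ t in a..b, g t) ^ 2 ≤ ⨍ t in a..b, g t ^ 2 :=
    even_two.convexOn_pow.map_set_average_le (continuous_pow 2).continuousOn isClosed_univ
      (by simp [sub_eq_zero, hlt.ne']) (by simp) (by simp) (intervalIntegrable_iff.1 hg)
      (intervalIntegrable_iff.1 hg2)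
  have hba : 0 < b - a := sub_pos.2 hlt
  rw [interval_average_eq_div, interval_average_eq_div, div_pow,
    div_le_div_iff₀ (by positivity) hba] at jensen
  nlinarith

theorem sq_sub_le_mul_intervalIntegral_deriv_sq {f : ℝ → ℝ} (hf : ContDiff ℝ 1 f) {a b : ℝ}
    (hab : a ≤ b) : (f b - f a) ^ 2 ≤ (b - a) * ∫ t in a..b, deriv f t ^ 2 := by
  have hf' : Continuous (deriv f) := hf.continuous_deriv le_rfl
  rw [← intervalIntegral.integral_deriv_eq_sub (fun x _ => hf.differentiable one_ne_zero x)
    (hf'.intervalIntegrable a b)]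
  exact sq_intervalIntegral_le hab (hf'.intervalIntegrable a b) ((hf'.pow 2).intervalIntegrable a b)

theorem sq_sub_le_abs_mul_integral_deriv_sq {f : ℝ → ℝ} (hf : ContDiff ℝ 1 f)
    (hi : Integrable (fun t => deriv f t ^ 2)) (x y : ℝ) :
    (f x - f y) ^ 2 ≤ |x - y| * ∫ t, deriv f t ^ 2 := by
  wlog hyx : y ≤ x generalizing x y
  · rw [← neg_sub, neg_sq, abs_sub_comm]
    exact this y x (le_of_not_ge hyx)
  calc (f x - f y) ^ 2 ≤ (x - y) * ∫ t in y..x, deriv f t ^ 2 :=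
        sq_sub_le_mul_intervalIntegral_deriv_sq hf hyx
    _ ≤ |x - y| * ∫ t, deriv f t ^ 2 := by
        rw [abs_of_nonneg (sub_nonneg.2 hyx), intervalIntegral.integral_of_le hyx]
        have hsub : ∫ t in Ioc y x, deriv f t ^ 2 ≤ ∫ t, deriv f t ^ 2 :=
          setIntegral_le_integral hi (Eventually.of_forall fun t => sq_nonneg _)
        exact mul_le_mul_of_nonneg_left hsub (sub_nonneg.2 hyx)

theorem exists_mem_Ioo_mul_le_integral {g : ℝ → ℝ} (hg : Continuous g) (hi : Integrable g)
    (h0 : 0 ≤ g) {a b : ℝ} (hab : a < b) : ∃ c ∈ Ioo a b, (b - a) * g c ≤ ∫ t, g t := by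
  obtain ⟨c, hc, hgc⟩ := exists_eq_interval_average hab.ne hg.continuousOn
  rw [uIoo_of_le hab.le] at hc
  refine ⟨c, hc, ?_⟩
  rw [hgc, interval_average_eq_div, mul_div_cancel₀ _ (sub_ne_zero.2 hab.ne'),
    intervalIntegral.integral_of_le hab.le]
  exact setIntegral_le_integral hi (Eventually.of_forall h0)

theorem rho_pos (x : ℝ) : 0 < rho x := inv_pos.2 (cosh_pos x)

theorem continuous_rho : Continuous rho :=
  continuous_cosh.inv₀ fun x => (cosh_pos x).ne'

theorem rho_le_one (x : ℝ) : rho x ≤ 1 :=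
  inv_le_one_of_one_le₀ (one_le_cosh x)

theorem exp_neg_abs_le_rho (x : ℝ) : exp (-|x|) ≤ rho x := by
  rw [rho, exp_neg, ← cosh_abs]
  refine inv_anti₀ (cosh_pos _) ?_
  rw [cosh_eq]
  linarith [exp_le_exp.2 (neg_le_self (abs_nonneg x))]

theorem rho_le_two_mul_exp_neg_abs (x : ℝ) : rho x ≤ 2 * exp (-|x|) := by
  rw [rho, exp_neg, ← cosh_abs, ← inv_inv (2 : ℝ), ← mul_inv]
  refine inv_anti₀ (by positivity) ?_
  rw [cosh_eq]
  linarith [exp_pos (-|x|)]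

theorem rho_rpow_mul_one_add_abs_le {κ : ℝ} (hκ : 0 < κ) (x : ℝ) :
    rho x ^ κ * (1 + |x|) ≤ 2 ^ κ * (1 + κ⁻¹) := by
  have hdecay : rho x ^ κ ≤ 2 ^ κ * exp (-(κ * |x|)) := by
    calc rho x ^ κ ≤ (2 * exp (-|x|)) ^ κ :=
          rpow_le_rpow (rho_pos x).le (rho_le_two_mul_exp_neg_abs x) hκ.le
      _ = 2 ^ κ * exp (-(κ * |x|)) := by
          rw [mul_rpow zero_le_two (exp_pos _).le, ← exp_mul]
          ring_nf
  have hgrowth : 1 + |x| ≤ (1 + κ⁻¹) * exp (κ * |x|) := by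
    calc 1 + |x| ≤ (1 + κ⁻¹) * (κ * |x| + 1) := by
          field_simp
          nlinarith [abs_nonneg x, mul_nonneg hκ.le (abs_nonneg x)]
      _ ≤ (1 + κ⁻¹) * exp (κ * |x|) := by
          gcongr
          exact add_one_le_exp _
  calc rho x ^ κ * (1 + |x|)
      ≤ 2 ^ κ * exp (-(κ * |x|)) * ((1 + κ⁻¹) * exp (κ * |x|)) := by
        gcongr
    _ = 2 ^ κ * (1 + κ⁻¹) := by
        rw [exp_neg]
        field_simp

theorem exists_mem_Ioo_sq_le_three_mul_integral_rho_mul_sq {f : ℝ → ℝ} (hf : Continuous f)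
    (hi : Integrable (fun x => rho x * f x ^ 2)) :
    ∃ y ∈ Ioo (0 : ℝ) 1, f y ^ 2 ≤ 3 * ∫ x, rho x * f x ^ 2 := by
  obtain ⟨y, hy, hle⟩ := exists_mem_Ioo_mul_le_integral (g := fun x => rho x * f x ^ 2)
    (continuous_rho.mul (hf.pow 2)) hi (fun x => mul_nonneg (rho_pos x).le (sq_nonneg _))
    zero_lt_one
  rw [sub_zero, one_mul] at hle
  have hrho : 3⁻¹ ≤ rho y :=
    calc (3 : ℝ)⁻¹ ≤ exp (-1) := by
          rw [exp_neg]
          exact inv_anti₀ (exp_pos 1) (by linarith [exp_one_lt_d9])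
      _ ≤ exp (-|y|) := by
          rw [exp_le_exp, neg_le_neg_iff, abs_of_pos hy.1]
          exact hy.2.le
      _ ≤ rho y := exp_neg_abs_le_rho y
  refine ⟨y, hy, ?_⟩
  nlinarith [sq_nonneg (f y)]

theorem sq_mul_rho_rpow_le {κ : ℝ} (hκ : 0 < κ) {f : ℝ → ℝ} (hf : ContDiff ℝ 1 f)
    (h1 : Integrable (fun x => deriv f x ^ 2)) (h2 : Integrable (fun x => rho x * f x ^ 2))
    (x : ℝ) :
    (f x * rho x ^ κ) ^ 2 ≤ (6 + 2 * (2 ^ (2 * κ) * (1 + (2 * κ)⁻¹))) *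
      ((∫ y, deriv f y ^ 2) + ∫ y, rho y * f y ^ 2) := by
  set D := ∫ y, deriv f y ^ 2
  set E := ∫ y, rho y * f y ^ 2
  set M := 2 ^ (2 * κ) * (1 + (2 * κ)⁻¹)
  have hD : 0 ≤ D := integral_nonneg fun y => sq_nonneg _
  have hE : 0 ≤ E := integral_nonneg fun y => mul_nonneg (rho_pos y).le (sq_nonneg _)
  obtain ⟨y, hy, hfy⟩ := exists_mem_Ioo_sq_le_three_mul_integral_rho_mul_sq hf.continuous h2
  have hxy : |x - y| ≤ 1 + |x| := by
    have := abs_sub x y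
    rw [abs_of_pos hy.1] at this
    linarith [hy.2]
  have hfx : f x ^ 2 ≤ 6 * E + 2 * (1 + |x|) * D := by
    have hdiff := sq_sub_le_abs_mul_integral_deriv_sq hf h1 x y
    nlinarith [sq_nonneg (f x - 2 * f y), mul_le_mul_of_nonneg_right hxy hD]
  have hw0 : 0 ≤ rho x ^ (2 * κ) := rpow_nonneg (rho_pos x).le _
  have hw1 : rho x ^ (2 * κ) ≤ 1 := rpow_le_one (rho_pos x).le (rho_le_one x) (by positivity)
  have hwM : rho x ^ (2 * κ) * (1 + |x|) ≤ M := rho_rpow_mul_one_add_abs_le (by positivity) x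
  calc (f x * rho x ^ κ) ^ 2 = f x ^ 2 * rho x ^ (2 * κ) := by
        rw [mul_pow, ← rpow_mul_natCast (rho_pos x).le]
        ring_nf
    _ ≤ (6 * E + 2 * (1 + |x|) * D) * rho x ^ (2 * κ) := by gcongr
    _ = 6 * E * rho x ^ (2 * κ) + 2 * D * (rho x ^ (2 * κ) * (1 + |x|)) := by ring
    _ ≤ 6 * E * 1 + 2 * D * M := by gcongr
    _ ≤ (6 + 2 * M) * (D + E) := by nlinarith [mul_nonneg hD hE, show 0 ≤ M by positivity]

/-- Weighted Sobolev-type bound: `‖f ρ^κ‖_{L^∞} ≲ (∫ (f')² + ∫ ρ f²)^{1/2}`. -/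
theorem weighted_sup_bound (κ : ℝ) (hκ : 0 < κ) :
    ∃ C > 0, ∀ f : ℝ → ℝ, ContDiff ℝ 1 f →
      Integrable (fun x => (deriv f x) ^ 2) →
      Integrable (fun x => rho x * f x ^ 2) →
      ∀ x, |f x| * rho x ^ κ
        ≤ C * Real.sqrt ((∫ y, (deriv f y) ^ 2) + ∫ y, rho y * f y ^ 2) := by
  refine ⟨√(6 + 2 * (2 ^ (2 * κ) * (1 + (2 * κ)⁻¹))), by positivity, fun f hf h1 h2 x => ?_⟩
  rw [← sqrt_mul (by positivity), ← abs_of_nonneg (rpow_nonneg (rho_pos x).le κ), ← abs_mul]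
  exact abs_le_sqrt (sq_mul_rho_rpow_le hκ hf h1 h2 x)
end

section
/- Let c ∈ (−√2, √2). For every continuously differentiable function w : ℝ → ℝ with w and w' bounded, one has ∫_ℝ (S_c* w)(x)·R_c(x)·Q_c(x) dx = (1/√2)·∫_ℝ Q_c(x)²·w(x) dx, where S_c* w = −w' + √2·R_c·w. In particular, if ε2 := S_c* w satisfies ∫ ε2·R_c·Q_c = 0, then ∫ Q_c²·w = 0. -/
open Real MeasureTheory

/-!
With `β = √(2 - c²)` one has `R_c' = Q_c / √2` and `Q_c' = -√2 R_c Q_c`, hence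
`(R_c Q_c w)' = Q_c² w / √2 - (S_c* w) R_c Q_c`. The functions `R_c`, `Q_c`, `w`, `w'` are bounded
and `Q_c` is integrable (`sech² y ≤ 1 / (1 + y²)`), so every term is integrable and the integral
of the exact derivative `(R_c Q_c w)'` over `ℝ` vanishes.
-/

namespace Real

theorem hasDerivAt_tanh_s17 (x : ℝ) : HasDerivAt tanh ((cosh x)⁻¹ ^ 2) x := by
  rw [show tanh = fun y => sinh y / cosh y from funext tanh_eq_sinh_div_cosh]
  refine ((hasDerivAt_sinh x).div (hasDerivAt_cosh x) (cosh_pos x).ne').congr_deriv ?_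
  rw [inv_pow, ← one_div, ← cosh_sq_sub_sinh_sq x]
  ring

theorem one_add_sq_le_cosh_sq (x : ℝ) : 1 + x ^ 2 ≤ cosh x ^ 2 := by
  have h : |x| ≤ |sinh x| := abs_sinh x ▸ self_le_sinh_iff.2 (abs_nonneg x)
  nlinarith [cosh_sq x, sq_abs x, sq_abs (sinh x), abs_nonneg x]

theorem integrable_inv_cosh_sq : Integrable fun x => (cosh x)⁻¹ ^ 2 := by
  refine integrable_inv_one_add_sq.mono' (by fun_prop) (.of_forall fun x => ?_)
  rw [norm_of_nonneg (by positivity), inv_pow]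
  exact inv_anti₀ (by positivity) (one_add_sq_le_cosh_sq x)

end Real

theorem Continuous.memLp_top_of_abs_le {α : Type*} [TopologicalSpace α] [MeasurableSpace α]
    [OpensMeasurableSpace α] {μ : Measure α} {f : α → ℝ} (hf : Continuous f)
    (hb : ∃ M, ∀ x, |f x| ≤ M) : MemLp f ⊤ μ :=
  let ⟨M, hM⟩ := hb
  memLp_top_of_bound hf.aestronglyMeasurable M (.of_forall hM)

theorem integral_mul_eq_of_hasDerivAt {R Q w w' : ℝ → ℝ} {k : ℝ}
    (hR : ∀ x, HasDerivAt R (Q x / k) x) (hQ : ∀ x, HasDerivAt Q (-(k * R x * Q x)) x)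
    (hw : ∀ x, HasDerivAt w (w' x) x) (hQi : Integrable Q) (hRb : MemLp R ⊤ volume)
    (hQb : MemLp Q ⊤ volume) (hwb : MemLp w ⊤ volume) (hw'b : MemLp w' ⊤ volume) :
    ∫ x, (-w' x + k * R x * w x) * R x * Q x = (1 / k) * ∫ x, Q x ^ 2 * w x := by
  have hderiv : ∀ x, HasDerivAt (fun x => R x * Q x * w x)
      (Q x ^ 2 * w x / k - (-w' x + k * R x * w x) * R x * Q x) x := fun x =>
    (((hR x).mul (hQ x)).mul (hw x)).congr_deriv (by simp only [Pi.mul_apply]; ring)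
  have hA : Integrable fun x => Q x ^ 2 * w x :=
    (hQi.mul_of_top_left (hQb.mul hwb)).congr
      (.of_forall fun x => by simp only [Pi.mul_apply]; ring)
  have hB : Integrable fun x => (-w' x + k * R x * w x) * R x * Q x :=
    (hQi.mul_of_top_left ((hw'b.neg.add ((hRb.const_mul k).mul hwb)).mul hRb)).congr
      (.of_forall fun x => by simp only [Pi.mul_apply, Pi.add_apply, Pi.neg_apply]; ring)
  have hg : Integrable fun x => R x * Q x * w x :=
    (hQi.mul_of_top_left (hRb.mul hwb)).congr
      (.of_forall fun x => by simp only [Pi.mul_apply]; ring)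
  have hzero := integral_eq_zero_of_hasDerivAt_of_integrable hderiv ((hA.div_const k).sub hB) hg
  rw [integral_sub (hA.div_const k) hB, integral_div, sub_eq_zero] at hzero
  rw [← hzero, one_div_mul_eq_div]

theorem hasDerivAt_mul_div_two (b x : ℝ) : HasDerivAt (fun y => b * y / 2) (b / 2) x := by
  simpa using ((hasDerivAt_id x).const_mul b).div_const 2

theorem Rc_eq (c x : ℝ) : Rc c x = √(2 - c ^ 2) / √2 * tanh (√(2 - c ^ 2) * x / 2) := by
  rw [Rc, sqrt_div' _ zero_le_two]

theorem hasDerivAt_Rc (c x : ℝ) : HasDerivAt (Rc c) (Q c x / √2) x := by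
  rw [show Rc c = fun y => √(2 - c ^ 2) / √2 * tanh (√(2 - c ^ 2) * y / 2) from funext (Rc_eq c)]
  refine (((hasDerivAt_tanh_s17 _).comp x (hasDerivAt_mul_div_two _ x)).const_mul _).congr_deriv ?_
  rw [Q]
  ring

theorem hasDerivAt_Q (c x : ℝ) : HasDerivAt (Q c) (-(√2 * Rc c x * Q c x)) x := by
  refine ((((hasDerivAt_cosh _).comp x (hasDerivAt_mul_div_two _ x)).inv (cosh_pos _).ne').pow 2
    |>.const_mul (√(2 - c ^ 2) ^ 2 / 2)).congr_deriv ?_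
  rw [Rc_eq, Q, tanh_eq_sinh_div_cosh]
  simp only [Function.comp_apply, Pi.inv_apply, Nat.cast_ofNat, Nat.add_one_sub_one, pow_one]
  have := (cosh_pos (√(2 - c ^ 2) * x / 2)).ne'
  field_simp

theorem integrable_Q (c : ℝ) : Integrable (Q c) := by
  rcases eq_or_ne (√(2 - c ^ 2)) 0 with hβ | hβ
  · rw [show Q c = 0 from funext fun x => by simp [Q, hβ]]
    exact integrable_zero _ _ _
  · refine (integrable_inv_cosh_sq.comp_mul_left' (div_ne_zero hβ two_ne_zero)).const_mul
      (√(2 - c ^ 2) ^ 2 / 2) |>.congr (.of_forall fun x => ?_)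
    show _ = Q c x
    rw [Q]
    ring_nf

theorem abs_Rc_le (c x : ℝ) : |Rc c x| ≤ √((2 - c ^ 2) / 2) := by
  rw [Rc, abs_mul, abs_of_nonneg (sqrt_nonneg _)]
  exact mul_le_of_le_one_right (sqrt_nonneg _) (abs_tanh_lt_one _).le

theorem abs_Q_le (c x : ℝ) : |Q c x| ≤ √(2 - c ^ 2) ^ 2 / 2 := by
  rw [Q, abs_of_nonneg (by positivity)]
  exact mul_le_of_le_one_right (by positivity)
    (pow_le_one₀ (by positivity) (inv_le_one_of_one_le₀ (one_le_cosh _)))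

theorem memLp_top_Rc (c : ℝ) {μ : Measure ℝ} : MemLp (Rc c) ⊤ μ :=
  (continuous_iff_continuousAt.2 fun x => (hasDerivAt_Rc c x).continuousAt).memLp_top_of_abs_le
    ⟨_, abs_Rc_le c⟩

theorem memLp_top_Q (c : ℝ) {μ : Measure ℝ} : MemLp (Q c) ⊤ μ :=
  (continuous_iff_continuousAt.2 fun x => (hasDerivAt_Q c x).continuousAt).memLp_top_of_abs_le
    ⟨_, abs_Q_le c⟩

theorem Sst_orthogonality_transfer_general (c : ℝ)
    (w : ℝ → ℝ) (hw : ContDiff ℝ 1 w)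
    (hwb : ∃ M, ∀ x, |w x| ≤ M) (hw'b : ∃ M, ∀ x, |deriv w x| ≤ M) :
    (∫ x, (-deriv w x + Real.sqrt 2 * Rc c x * w x) * Rc c x * Q c x)
      = (1 / Real.sqrt 2) * ∫ x, (Q c x) ^ 2 * w x ∧
    ((∫ x, (-deriv w x + Real.sqrt 2 * Rc c x * w x) * Rc c x * Q c x) = 0 →
      (∫ x, (Q c x) ^ 2 * w x) = 0) := by
  have key := integral_mul_eq_of_hasDerivAt (hasDerivAt_Rc c) (hasDerivAt_Q c)
    (fun x => (hw.differentiable one_ne_zero x).hasDerivAt) (integrable_Q c)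
    (memLp_top_Rc c) (memLp_top_Q c) (hw.continuous.memLp_top_of_abs_le hwb)
    ((hw.continuous_deriv le_rfl).memLp_top_of_abs_le hw'b)
  refine ⟨key, fun h => ?_⟩
  rw [key] at h
  exact (mul_eq_zero.1 h).resolve_left (by positivity)

/-- For `w` of class `C¹` with `w, w'` bounded,
`∫ (S_c* w) R_c Q_c = (1/√2) ∫ Q_c² w`; in particular if `ε₂ = S_c* w` is
orthogonal to `R_c Q_c`, then `∫ Q_c² w = 0`. -/
theorem Sst_orthogonality_transfer (c : ℝ)
    (hc : c ∈ Set.Ioo (-Real.sqrt 2) (Real.sqrt 2))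
    (w : ℝ → ℝ) (hw : ContDiff ℝ 1 w)
    (hwb : ∃ M, ∀ x, |w x| ≤ M) (hw'b : ∃ M, ∀ x, |deriv w x| ≤ M) :
    (∫ x, (-deriv w x + Real.sqrt 2 * Rc c x * w x) * Rc c x * Q c x)
      = (1 / Real.sqrt 2) * ∫ x, (Q c x) ^ 2 * w x ∧
    ((∫ x, (-deriv w x + Real.sqrt 2 * Rc c x * w x) * Rc c x * Q c x) = 0 →
      (∫ x, (Q c x) ^ 2 * w x) = 0) :=
  Sst_orthogonality_transfer_general c w hw hwb hw'b
end

section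
/- Let c ∈ (−√2, √2) and β = √(2 − c²). For every w1 ∈ L²(ℝ; ℝ) and every twice continuously differentiable w2 : ℝ → ℝ with ∂_x w2 ∈ L² and ∂_x² w2 ∈ L², one has ∫_ℝ (w1 − 2c·∂_x w2)² + β²·∫_ℝ (∂_x w2)² + 3·∫_ℝ (∂_x² w2)² ≥ (β²/16)·( ∫_ℝ w1² + ∫_ℝ (∂_x w2)² + ∫_ℝ (∂_x² w2)² ). -/
open Real MeasureTheory

/-! Pointwise, write `a = (a - 2cb) + 2cb` and apply Young's inequality with weights `15/7`, `15/8`: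
`a² ≤ (15/7)(a - 2cb)² + (15/2)c²b²`. Since `β² ≤ 2` the first term costs at most `(15/56)(a - 2cb)²`,
and since `c² ≤ 2` the second costs at most `(15/16)β²b²`, which leaves exactly `β²/16` of the
`β²b²` term for `b²` itself. Integrating the pointwise inequality gives the theorem. -/

lemma sq_le_weighted_sq_sub_add_sq (a b c : ℝ) :
    a ^ 2 ≤ 15 / 7 * (a - 2 * c * b) ^ 2 + 15 / 2 * c ^ 2 * b ^ 2 := by
  nlinarith [sq_nonneg (8 * (a - 2 * c * b) - 14 * c * b)]

lemma virial_form_coercive_pointwise {c : ℝ} (hc : c ^ 2 ≤ 2) (a b u : ℝ) :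
    (2 - c ^ 2) / 16 * (a ^ 2 + b ^ 2 + u ^ 2)
      ≤ (a - 2 * c * b) ^ 2 + (2 - c ^ 2) * b ^ 2 + 3 * u ^ 2 := by
  have hβ : 0 ≤ 2 - c ^ 2 := by linarith
  have hβ_small : 0 ≤ 112 - 15 * (2 - c ^ 2) := by linarith [sq_nonneg c]
  nlinarith [mul_le_mul_of_nonneg_left (sq_le_weighted_sq_sub_add_sq a b c) hβ,
    mul_nonneg hβ_small (sq_nonneg (a - 2 * c * b)),
    mul_nonneg (mul_nonneg hβ hβ) (sq_nonneg b), sq_nonneg u]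

lemma virial_form_coercive {α : Type*} [MeasurableSpace α] {μ : Measure α} {c : ℝ}
    (hc : c ^ 2 ≤ 2) {f g h : α → ℝ} (hf : MemLp f 2 μ) (hg : MemLp g 2 μ) (hh : MemLp h 2 μ) :
    (2 - c ^ 2) / 16 * ((∫ x, f x ^ 2 ∂μ) + (∫ x, g x ^ 2 ∂μ) + ∫ x, h x ^ 2 ∂μ)
      ≤ (∫ x, (f x - 2 * c * g x) ^ 2 ∂μ) + (2 - c ^ 2) * (∫ x, g x ^ 2 ∂μ)
        + 3 * ∫ x, h x ^ 2 ∂μ := by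
  have hf2 := hf.integrable_sq
  have hg2 := hg.integrable_sq
  have hh2 := hh.integrable_sq
  have hfg2 : Integrable (fun x ↦ (f x - 2 * c * g x) ^ 2) μ :=
    (hf.sub (hg.const_mul (2 * c))).integrable_sq
  have hfg : Integrable (fun x ↦ f x ^ 2 + g x ^ 2) μ := hf2.add hg2
  have hQ : Integrable (fun x ↦ (f x - 2 * c * g x) ^ 2 + (2 - c ^ 2) * g x ^ 2) μ :=
    hfg2.add (hg2.const_mul _)
  calc (2 - c ^ 2) / 16 * ((∫ x, f x ^ 2 ∂μ) + (∫ x, g x ^ 2 ∂μ) + ∫ x, h x ^ 2 ∂μ)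
      = ∫ x, (2 - c ^ 2) / 16 * (f x ^ 2 + g x ^ 2 + h x ^ 2) ∂μ := by
        rw [integral_const_mul, integral_add hfg hh2, integral_add hf2 hg2]
    _ ≤ ∫ x, ((f x - 2 * c * g x) ^ 2 + (2 - c ^ 2) * g x ^ 2 + 3 * h x ^ 2) ∂μ :=
        integral_mono ((hfg.add hh2).const_mul _) (hQ.add (hh2.const_mul _))
          fun x ↦ virial_form_coercive_pointwise hc (f x) (g x) (h x)
    _ = _ := by
        rw [integral_add hQ (hh2.const_mul _), integral_add hfg2 (hg2.const_mul _),
          integral_const_mul, integral_const_mul]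

theorem virial_coercivity_general (c : ℝ)
    (hc : c ∈ Set.Ioo (-Real.sqrt 2) (Real.sqrt 2))
    (w1 : ℝ → ℝ) (hw1 : MeasureTheory.MemLp w1 2 (volume : Measure ℝ))
    (w2 : ℝ → ℝ)
    (hw2' : MeasureTheory.MemLp (deriv w2) 2 (volume : Measure ℝ))
    (hw2'' : MeasureTheory.MemLp (deriv (deriv w2)) 2 (volume : Measure ℝ)) :
    (∫ x, (w1 x - 2 * c * deriv w2 x) ^ 2)
      + (Real.sqrt (2 - c ^ 2)) ^ 2 * (∫ x, (deriv w2 x) ^ 2)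
      + 3 * (∫ x, (deriv (deriv w2) x) ^ 2)
    ≥ (Real.sqrt (2 - c ^ 2)) ^ 2 / 16
      * ((∫ x, (w1 x) ^ 2) + (∫ x, (deriv w2 x) ^ 2)
        + ∫ x, (deriv (deriv w2) x) ^ 2) := by
  have hc2 : c ^ 2 ≤ 2 := by
    simpa using (sq_lt_sq' hc.1 hc.2).le
  rw [Real.sq_sqrt (by linarith)]
  exact virial_form_coercive hc2 hw1 hw2' hw2''

/-- Coercivity of the quadratic form in the virial identity:
`∫ (w₁ - 2c ∂ₓw₂)² + β² ∫ (∂ₓw₂)² + 3 ∫ (∂ₓ²w₂)²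
  ≥ (β²/16) (∫ w₁² + ∫ (∂ₓw₂)² + ∫ (∂ₓ²w₂)²)`. -/
theorem virial_coercivity (c : ℝ)
    (hc : c ∈ Set.Ioo (-Real.sqrt 2) (Real.sqrt 2))
    (w1 : ℝ → ℝ) (hw1 : MeasureTheory.MemLp w1 2 (volume : Measure ℝ))
    (w2 : ℝ → ℝ) (hw2 : ContDiff ℝ 2 w2)
    (hw2' : MeasureTheory.MemLp (deriv w2) 2 (volume : Measure ℝ))
    (hw2'' : MeasureTheory.MemLp (deriv (deriv w2)) 2 (volume : Measure ℝ)) :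
    (∫ x, (w1 x - 2 * c * deriv w2 x) ^ 2)
      + (Real.sqrt (2 - c ^ 2)) ^ 2 * (∫ x, (deriv w2 x) ^ 2)
      + 3 * (∫ x, (deriv (deriv w2) x) ^ 2)
    ≥ (Real.sqrt (2 - c ^ 2)) ^ 2 / 16
      * ((∫ x, (w1 x) ^ 2) + (∫ x, (deriv w2 x) ^ 2)
        + ∫ x, (deriv (deriv w2) x) ^ 2) :=
  virial_coercivity_general c hc w1 hw1 w2 hw2' hw2''
end
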